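/- Let J be the symmetric 5×5 Jacobian of the star-cycle network with M = 5, J_{ik} = Σ_{j=1}^{5} β_j φ_{ij} φ_{kj} − γ·δ_{ik}. Assume 0 < β0 < γ (so R0 = β0/γ < 1) and γ/β0 < ζ < 1 + 5(1−R0)/R0. If φ0 ∈ (0, 1/4] and |φ0 − 1/5| < φ̃5, then every eigenvalue of J is negative; if φ0 ∈ (0, 1/4] and |φ0 − 1/5| > φ̃5, then J has a positive eigenvalue. -/

import Mathlib

/-!
The Jacobian commutes with the symmetries of the 4-cycle, so its characteristic polynomial
factors: the cycle modes orthogonal to the uniform one have the eigenvalues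
`β0 (1 - 3φ0)² - γ` (twice) and `β0 (1 - 5φ0)² - γ`, both negative since `β0 < γ`, and the
other two eigenvalues are those of the 2×2 block coupling the uniform cycle mode with the hub.
The determinant of that block is `5 β0 K (φ̃5² - (φ0 - 1/5)²)` with
`K = 5ζ(γ - β0) - γ(ζ - 1) > 0`, so it changes sign exactly at `|φ0 - 1/5| = φ̃5`.
A negative determinant gives a positive eigenvalue. A positive one makes both eigenvalues of
the block have the sign of its trace, which is negative because `5γ > β0 (4 + ζ)` forces
one diagonal entry of the block to be negative.
-/

open Matrix

/-- Flux matrix of the star-cycle network with `M = 5`. -/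
noncomputable def scFlux5 (φ0 : ℝ) : Matrix (Fin 5) (Fin 5) ℝ :=
  !![1 - 3*φ0, φ0, 0, φ0, φ0;
     φ0, 1 - 3*φ0, φ0, 0, φ0;
     0, φ0, 1 - 3*φ0, φ0, φ0;
     φ0, 0, φ0, 1 - 3*φ0, φ0;
     φ0, φ0, φ0, φ0, 1 - 4*φ0]

/-- Infection rates: `β₁ = … = β₄ = β0`, `β₅ = ζ·β0`. -/
noncomputable def scBeta5 (β0 ζ : ℝ) : Fin 5 → ℝ := ![β0, β0, β0, β0, ζ * β0]

/-- Jacobian of the infected subsystem at the disease-free equilibrium: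
`J_{ik} = Σ_j β_j φ_{ij} φ_{kj} − γ·δ_{ik}`. -/
noncomputable def scJac5 (β0 ζ γ φ0 : ℝ) : Matrix (Fin 5) (Fin 5) ℝ :=
  Matrix.of fun i k =>
    (∑ j, scBeta5 β0 ζ j * scFlux5 φ0 i j * scFlux5 φ0 k j)
      - γ * (if i = k then 1 else 0)

def starCycleMatrix {R : Type*} (d o₁ o₂ h d₅ : R) : Matrix (Fin 5) (Fin 5) R :=
  !![d, o₁, o₂, o₁, h;
     o₁, d, o₁, o₂, h;
     o₂, o₁, d, o₁, h;
     o₁, o₂, o₁, d, h;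
     h, h, h, h, d₅]

-- `(1,0,-1,0,0)` and `(0,1,0,-1,0)` are eigenvectors for `d - o₂`, `(1,-1,1,-1,0)` for
-- `d - 2o₁ + o₂`, and the last factor is the characteristic polynomial of the matrix
-- `!![d + 2o₁ + o₂, h; 4h, d₅]` acting on the span of `(1,1,1,1,0)` and `(0,0,0,0,1)`.
theorem det_scalar_sub_starCycleMatrix {R : Type*} [CommRing R] (d o₁ o₂ h d₅ μ : R) :
    (scalar (Fin 5) μ - starCycleMatrix d o₁ o₂ h d₅).det =
      (μ - (d - o₂)) ^ 2 * (μ - (d - 2 * o₁ + o₂)) *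
        (μ ^ 2 - (d + 2 * o₁ + o₂ + d₅) * μ + ((d + 2 * o₁ + o₂) * d₅ - 4 * h ^ 2)) := by
  simp [starCycleMatrix, det_succ_row_zero, Fin.sum_univ_succ, Fin.succAbove]
  ring

theorem mem_spectrum_starCycleMatrix_iff {K : Type*} [Field K] (d o₁ o₂ h d₅ μ : K) :
    μ ∈ spectrum K (starCycleMatrix d o₁ o₂ h d₅) ↔
      μ = d - o₂ ∨ μ = d - 2 * o₁ + o₂ ∨
        μ ^ 2 - (d + 2 * o₁ + o₂ + d₅) * μ + ((d + 2 * o₁ + o₂) * d₅ - 4 * h ^ 2) = 0 := by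
  rw [mem_spectrum_iff_isRoot_charpoly, Polynomial.IsRoot.def, eval_charpoly,
    det_scalar_sub_starCycleMatrix]
  simp only [mul_eq_zero, pow_eq_zero_iff two_ne_zero, sub_eq_zero, or_assoc]

theorem scJac5_eq_starCycleMatrix (β0 ζ γ p : ℝ) :
    scJac5 β0 ζ γ p = starCycleMatrix
      (β0 * ((1 - 3 * p) ^ 2 + 2 * p ^ 2) + ζ * β0 * p ^ 2 - γ)
      (2 * β0 * (1 - 3 * p) * p + ζ * β0 * p ^ 2)
      ((2 + ζ) * β0 * p ^ 2)
      (β0 * p * (1 - p) + ζ * β0 * p * (1 - 4 * p))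
      (4 * β0 * p ^ 2 + ζ * β0 * (1 - 4 * p) ^ 2 - γ) := by
  ext i k
  fin_cases i <;> fin_cases k <;>
    simp [scJac5, starCycleMatrix, scFlux5, scBeta5, Fin.sum_univ_five] <;> ring

theorem mem_spectrum_scJac5_iff (β0 ζ γ p μ : ℝ) :
    μ ∈ spectrum ℝ (scJac5 β0 ζ γ p) ↔
      μ = β0 * (1 - 3 * p) ^ 2 - γ ∨ μ = β0 * (1 - 5 * p) ^ 2 - γ ∨
        μ ^ 2 - ((β0 * (1 - p) ^ 2 + 4 * ζ * β0 * p ^ 2 - γ)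
            + (4 * β0 * p ^ 2 + ζ * β0 * (1 - 4 * p) ^ 2 - γ)) * μ
          + ((β0 * (1 - p) ^ 2 + 4 * ζ * β0 * p ^ 2 - γ)
              * (4 * β0 * p ^ 2 + ζ * β0 * (1 - 4 * p) ^ 2 - γ)
            - 4 * (β0 * p * (1 - p) + ζ * β0 * p * (1 - 4 * p)) ^ 2) = 0 := by
  rw [scJac5_eq_starCycleMatrix, mem_spectrum_starCycleMatrix_iff]
  ring_nf

theorem neg_of_quadratic_eq_zero {T Δ μ : ℝ} (hT : T < 0) (hΔ : 0 < Δ)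
    (h : μ ^ 2 - T * μ + Δ = 0) : μ < 0 := by
  nlinarith [sq_nonneg μ]

theorem exists_pos_quadratic_root {Δ : ℝ} (T : ℝ) (hΔ : Δ < 0) :
    ∃ μ : ℝ, 0 < μ ∧ μ ^ 2 - T * μ + Δ = 0 := by
  have hdisc : 0 ≤ T ^ 2 - 4 * Δ := by nlinarith [sq_nonneg T]
  have hT : |T| < √(T ^ 2 - 4 * Δ) := by
    rw [Real.lt_sqrt (abs_nonneg T), sq_abs]; linarith
  refine ⟨(T + √(T ^ 2 - 4 * Δ)) / 2, by linarith [neg_abs_le T], ?_⟩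
  linear_combination (Real.sq_sqrt hdisc) / 4

theorem add_neg_of_sub_sq_pos {s d h : ℝ} (hdet : 0 < s * d - 4 * h ^ 2) (hsd : s < 0 ∨ d < 0) :
    s + d < 0 := by
  rcases hsd with hs | hd
  · nlinarith [sq_nonneg h]
  · nlinarith [sq_nonneg h]

theorem sq_one_sub_lt_one {t : ℝ} (h₀ : 0 < t) (h₂ : t < 2) : (1 - t) ^ 2 < 1 := by
  nlinarith

theorem starCycle_diag_le {ζ p : ℝ} (hζ : 1 ≤ ζ) (hp : 0 ≤ p) (hp' : p ≤ 1 / 4) :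
    5 * ((1 - p) ^ 2 + 4 * ζ * p ^ 2) ≤ 4 + ζ ∨ 5 * (4 * p ^ 2 + ζ * (1 - 4 * p) ^ 2) ≤ 4 + ζ := by
  rcases le_or_gt p (1 / 5) with h | h
  · left
    nlinarith [mul_nonneg (sub_nonneg.2 hζ) (sub_nonneg.2 h)]
  · right
    have hsq : (1 - 4 * p) ^ 2 ≤ 1 / 5 := by nlinarith
    nlinarith [mul_le_mul_of_nonneg_left hsq (by linarith : (0 : ℝ) ≤ ζ)]

theorem scJac5_block_det_eq {β0 γ ζ : ℝ} (p : ℝ) (hβ0 : β0 ≠ 0) (hγ : γ ≠ 0)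
    (hK : 5 * ζ * (γ - β0) - γ * (ζ - 1) ≠ 0) :
    (β0 * (1 - p) ^ 2 + 4 * ζ * β0 * p ^ 2 - γ) * (4 * β0 * p ^ 2 + ζ * β0 * (1 - 4 * p) ^ 2 - γ)
        - 4 * (β0 * p * (1 - p) + ζ * β0 * p * (1 - 4 * p)) ^ 2 =
      β0 * (5 * ζ * (γ - β0) - γ * (ζ - 1)) / 5 *
        ((5 * (1 - β0 / γ) - (β0 / γ) * (ζ - 1)) /
            ((β0 / γ) * (5 * ζ * (1 - β0 / γ) - (ζ - 1))) - 25 * (p - 1 / 5) ^ 2) := by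
  have hq : (5 * (1 - β0 / γ) - (β0 / γ) * (ζ - 1)) /
      ((β0 / γ) * (5 * ζ * (1 - β0 / γ) - (ζ - 1))) =
      γ * (5 * (γ - β0) - β0 * (ζ - 1)) / (β0 * (5 * ζ * (γ - β0) - γ * (ζ - 1))) := by
    field_simp
  have hcancel : β0 * (5 * ζ * (γ - β0) - γ * (ζ - 1)) / 5 *
      (γ * (5 * (γ - β0) - β0 * (ζ - 1)) / (β0 * (5 * ζ * (γ - β0) - γ * (ζ - 1)))) =
      γ * (5 * (γ - β0) - β0 * (ζ - 1)) / 5 := by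
    field_simp
  rw [hq]
  linear_combination -hcancel

theorem sq_lt_of_abs_lt_mul_sqrt {x c q : ℝ} (hc : 0 ≤ c) (h : |x| < c * √q) :
    x ^ 2 < c ^ 2 * q := by
  rw [← Real.sqrt_sq hc, ← Real.sqrt_mul (sq_nonneg c), Real.lt_sqrt (abs_nonneg x), sq_abs] at h
  exact h

theorem lt_sq_of_mul_sqrt_lt_abs {x c q : ℝ} (hc : 0 ≤ c) (h : c * √q < |x|) :
    c ^ 2 * q < x ^ 2 := by
  rw [← Real.sqrt_sq hc, ← Real.sqrt_mul (sq_nonneg c)] at h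
  simpa only [sq_abs] using Real.lt_sq_of_sqrt_lt h

section

variable {β0 ζ γ p : ℝ}

theorem scJac5_spectrum_neg (hβ0 : 0 < β0) (hβγ : β0 < γ) (hζ : 1 ≤ ζ)
    (h5γ : β0 * (4 + ζ) < 5 * γ) (hp : 0 < p) (hp' : p ≤ 1 / 4)
    (hdet : 0 < (β0 * (1 - p) ^ 2 + 4 * ζ * β0 * p ^ 2 - γ)
        * (4 * β0 * p ^ 2 + ζ * β0 * (1 - 4 * p) ^ 2 - γ)
      - 4 * (β0 * p * (1 - p) + ζ * β0 * p * (1 - 4 * p)) ^ 2) :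
    ∀ μ ∈ spectrum ℝ (scJac5 β0 ζ γ p), μ < 0 := by
  have htrace := add_neg_of_sub_sq_pos hdet <| by
    rcases starCycle_diag_le hζ hp.le hp' with h | h
    exacts [Or.inl (by nlinarith), Or.inr (by nlinarith)]
  intro μ hμ
  rcases (mem_spectrum_scJac5_iff β0 ζ γ p μ).1 hμ with rfl | rfl | hroot
  · nlinarith [sq_one_sub_lt_one (t := 3 * p) (by linarith) (by linarith)]
  · nlinarith [sq_one_sub_lt_one (t := 5 * p) (by linarith) (by linarith)]
  · exact neg_of_quadratic_eq_zero htrace hdet hroot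

theorem exists_pos_mem_spectrum_scJac5
    (hdet : (β0 * (1 - p) ^ 2 + 4 * ζ * β0 * p ^ 2 - γ)
        * (4 * β0 * p ^ 2 + ζ * β0 * (1 - 4 * p) ^ 2 - γ)
      - 4 * (β0 * p * (1 - p) + ζ * β0 * p * (1 - 4 * p)) ^ 2 < 0) :
    ∃ μ ∈ spectrum ℝ (scJac5 β0 ζ γ p), 0 < μ := by
  obtain ⟨μ, hμ, hroot⟩ := exists_pos_quadratic_root _ hdet
  exact ⟨μ, (mem_spectrum_scJac5_iff β0 ζ γ p μ).2 (Or.inr (Or.inr hroot)), hμ⟩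

end

theorem starCycle5_DFE (β0 γ ζ φ0 : ℝ)
    (hβ0 : 0 < β0) (hβγ : β0 < γ)
    (hζlo : γ / β0 < ζ)
    (hζhi : ζ < 1 + 5 * (1 - β0 / γ) / (β0 / γ))
    (hφlo : 0 < φ0) (hφhi : φ0 ≤ 1 / 4) :
    (|φ0 - 1 / 5| <
        (1 / 5) * Real.sqrt ((5 * (1 - β0 / γ) - (β0 / γ) * (ζ - 1)) /
          ((β0 / γ) * (5 * ζ * (1 - β0 / γ) - (ζ - 1)))) →
      ∀ μ ∈ spectrum ℝ (scJac5 β0 ζ γ φ0), μ < 0) ∧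
    ((1 / 5) * Real.sqrt ((5 * (1 - β0 / γ) - (β0 / γ) * (ζ - 1)) /
          ((β0 / γ) * (5 * ζ * (1 - β0 / γ) - (ζ - 1)))) < |φ0 - 1 / 5| →
      ∃ μ ∈ spectrum ℝ (scJac5 β0 ζ γ φ0), 0 < μ) := by
  have hγ : 0 < γ := hβ0.trans hβγ
  have hζ : γ < ζ * β0 := (div_lt_iff₀ hβ0).1 hζlo
  have h5γ : β0 * (4 + ζ) < 5 * γ := by
    rw [← sub_lt_iff_lt_add', lt_div_iff₀ (div_pos hβ0 hγ)] at hζhi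
    field_simp at hζhi
    linarith
  have hK : 0 < 5 * ζ * (γ - β0) - γ * (ζ - 1) := by nlinarith
  have hc : 0 < β0 * (5 * ζ * (γ - β0) - γ * (ζ - 1)) / 5 := by positivity
  have hΔ := scJac5_block_det_eq φ0 hβ0.ne' hγ.ne' hK.ne'
  refine ⟨fun hlt => ?_, fun hgt => ?_⟩
  · have hsq := sq_lt_of_abs_lt_mul_sqrt (by norm_num) hlt
    refine scJac5_spectrum_neg hβ0 hβγ (by nlinarith) h5γ hφlo hφhi ?_
    rw [hΔ]
    exact mul_pos hc (by linarith)
  · have hsq := lt_sq_of_mul_sqrt_lt_abs (by norm_num) hgt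
    refine exists_pos_mem_spectrum_scJac5 ?_
    rw [hΔ]
    exact mul_neg_of_pos_of_neg hc (by linarith)
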